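/- Let F be a field, N a natural number, V an (N+1)-dimensional vector space over F, and B a Billiard Array on V. Pick η ∈ {1,2,3} and let S be a subset of Δ_N such that distinct elements of S have distinct η-coordinates (S is η-geodesic). Then the sum ∑_{λ∈S} B_λ is direct, i.e., the family of subspaces (B_λ)_{λ∈S} is independent. -/

import Mathlib

/-- `Δ_N`: the set of triples of natural numbers with sum `N`. -/
def BA.Delta (N : ℕ) : Set (Fin 3 → ℕ) := {v | v 0 + v 1 + v 2 = N}

/-- A line in `Δ_N`: the set of locations with a given `η`-coordinate `c`. -/
def BA.IsLine (N : ℕ) (L : Set (Fin 3 → ℕ)) : Prop :=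
  ∃ (η : Fin 3) (c : ℕ), c ≤ N ∧ L = {v ∈ BA.Delta N | v η = c}

/-- The black 3-clique attached to `(r,s,t)`. -/
def BA.blackSet (r s t : ℕ) : Set (Fin 3 → ℕ) :=
  {![r + 1, s, t], ![r, s + 1, t], ![r, s, t + 1]}

/-- A Billiard Array on `V`: a function assigning to each location of `Δ_N` a
one-dimensional subspace of `V`, such that the sum over each line is direct and
the sum over each black 3-clique is not direct. -/
def BA.IsBilliardArray {F V : Type*} [Field F] [AddCommGroup V] [Module F V]
    (N : ℕ) (B : (Fin 3 → ℕ) → Submodule F V) : Prop :=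
  (∀ v ∈ BA.Delta N, Module.finrank F (B v) = 1) ∧
  (∀ L : Set (Fin 3 → ℕ), BA.IsLine N L → iSupIndep fun x : L => B x.1) ∧
  (∀ r s t : ℕ, r + s + t + 1 = N → ¬ iSupIndep fun x : BA.blackSet r s t => B x.1)

/-!
Let `W c` be the span of the `B λ` with `λ` on the `η`-line `c`. The black 3-cliques give
`W (c + 1) ≤ W c`, and they show that whether `B λ ≤ W (c + 1)` holds is the same for all `λ` on
line `c` (neighbours on the line form a clique with a location of line `c + 1`). If it held, the
`N - c + 1` independent lines `B λ` of line `c` would lie in `W (c + 1)`, which is spanned by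
`N - c` lines. Hence `B λ` is disjoint from `W (c + 1)`, so every `B λ`, `λ ∈ S`, is disjoint from
the span of the `B μ`, `μ ∈ S`, with larger `η`-coordinate, and for subspaces of a vector space
this forces independence.
-/

open Function Submodule

section Lattice

theorem IsAtom.le_sup_of_le_sup_of_not_le {α : Type*} [Lattice α] [OrderBot α]
    [IsUpperModularLattice α] {a b c : α} (hb : IsAtom b) (hac : ¬a ≤ c)
    (h : a ≤ b ⊔ c) : b ≤ a ⊔ c := by
  by_cases hbc : b ≤ c
  · exact le_sup_of_le_right hbc
  have hcov : c ⋖ b ⊔ c := by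
    refine covBy_sup_of_inf_covBy_left ?_
    rwa [disjoint_iff.mp (hb.not_le_iff_disjoint.mp hbc), bot_covBy_iff]
  have hlt : c < a ⊔ c := right_lt_sup.mpr hac
  obtain hac' | hac' := hcov.eq_or_eq hlt.le (sup_le h le_sup_right)
  · exact absurd hac' hlt.ne'
  · exact hac' ▸ le_sup_left

variable {α : Type*} [CompleteLattice α] [IsModularLattice α]

theorem le_sup_of_not_iSupIndep_fin_three {f : Fin 3 → α} (hf : ∀ i, IsAtom (f i))
    (hne : ∀ i, f i ≠ f (i + 1)) (h : ¬iSupIndep f) (i : Fin 3) :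
    f i ≤ f (i + 1) ⊔ f (i + 2) := by
  have step : ∀ i, f i ≤ f (i + 1) ⊔ f (i + 2) → f (i + 2) ≤ f (i + 2 + 1) ⊔ f (i + 2 + 2) := by
    intro i hi
    rw [show i + 2 + 1 = i by fin_cases i <;> rfl, show i + 2 + 2 = i + 1 by fin_cases i <;> rfl]
    refine (hf (i + 2)).le_sup_of_le_sup_of_not_le (fun hle => hne i ?_) (by rwa [sup_comm])
    exact ((hf (i + 1)).le_iff_eq (hf i).ne_bot).mp hle
  obtain ⟨j, hj⟩ : ∃ j, f j ≤ f (j + 1) ⊔ f (j + 2) := by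
    simp only [iSupIndep_fin_three, (hf _).not_le_iff_disjoint.symm, not_and_or, not_not] at h
    rcases h with h | h | h
    exacts [⟨0, h⟩, ⟨1, h⟩, ⟨2, h⟩]
  have hj1 : f (j + 1) ≤ f (j + 1 + 1) ⊔ f (j + 1 + 2) := by
    have := step _ (step j hj)
    rwa [show j + 2 + 2 = j + 1 by fin_cases j <;> rfl] at this
  obtain rfl | rfl | rfl : i = j ∨ i = j + 1 ∨ i = j + 2 := by
    fin_cases i <;> fin_cases j <;> decide
  exacts [hj, hj1, step j hj]

variable [IsCompactlyGenerated α]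

theorem iSupIndep_of_disjoint_iSup_lt {ι β : Type*} [LinearOrder β] {f : ι → α} {h : ι → β}
    (hinj : Injective h) (hdisj : ∀ i, Disjoint (f i) (⨆ (j) (_ : h i < h j), f j)) :
    iSupIndep f := by
  classical
  refine iSupIndep_iff_supIndep.mpr fun s => ?_
  induction s using Finset.induction_on_min_value h with
  | empty => exact Finset.supIndep_empty f
  | insert a s has hmin ih =>
    refine ih.insert ((hdisj a).mono_right (Finset.sup_le fun j hj => le_iSup₂_of_le j ?_ le_rfl))
    exact (hmin j hj).lt_of_ne (hinj.ne (ne_of_mem_of_not_mem hj has).symm)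

end Lattice

theorem card_le_card_of_iSupIndep_le_iSup {K V : Type*} [DivisionRing K] [AddCommGroup V]
    [Module K V] {ι κ : Type*} [Fintype ι] [Fintype κ] {p : ι → Submodule K V}
    {q : κ → Submodule K V} (hp : iSupIndep p) (hp0 : ∀ i, p i ≠ ⊥) (hq : ∀ j, IsAtom (q j))
    (hle : ∀ i, p i ≤ ⨆ j, q j) : Fintype.card ι ≤ Fintype.card κ := by
  classical
  choose v hv hv0 using fun i => (p i).ne_bot_iff.mp (hp0 i)
  choose w hw hw0 using fun j => (q j).ne_bot_iff.mp (hq j).ne_bot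
  have hq_eq : ∀ j, K ∙ w j = q j := fun j =>
    ((hq j).le_iff_eq ((span_singleton_eq_bot).not.mpr (hw0 j))).mp
      ((span_singleton_le_iff_mem _ _).mpr (hw j))
  have hspan : ⨆ j, q j = span K (Set.range w) := by
    simp_rw [span_range_eq_iSup, hq_eq]
  calc Fintype.card ι
      ≤ Fintype.card (Set.range w) :=
        linearIndependent_le_span_aux' v (hp.linearIndependent _ hv hv0) (Set.range w)
          (Set.range_subset_iff.mpr fun i => hspan ▸ hle i (hv i))
    _ ≤ Fintype.card κ := Fintype.card_range_le w

namespace BA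

/-- The location with coordinates `a, b, c` at positions `η, η + 1, η + 2`. -/
def point (η : Fin 3) (a b c : ℕ) : Fin 3 → ℕ := fun i => ![a, b, c] (i - η)

@[simp] lemma point_self (η : Fin 3) (a b c : ℕ) : point η a b c η = a := by simp [point]

@[simp] lemma point_add_one (η : Fin 3) (a b c : ℕ) : point η a b c (η + 1) = b := by
  simp [point]

lemma point_zero (a b c : ℕ) : point 0 a b c = ![a, b, c] := by
  funext i; simp [point]

lemma point_one (a b c : ℕ) : point 1 a b c = ![c, a, b] := by
  funext i; fin_cases i <;> rfl

lemma point_two (a b c : ℕ) : point 2 a b c = ![b, c, a] := by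
  funext i; fin_cases i <;> rfl

lemma point_rotate (η : Fin 3) (a b c : ℕ) : point (η + 1) a b c = point η c a b := by
  funext i; fin_cases η <;> fin_cases i <;> rfl

lemma point_rotate_two (η : Fin 3) (a b c : ℕ) : point (η + 2) a b c = point η b c a := by
  funext i; fin_cases η <;> fin_cases i <;> rfl

lemma eq_point (v : Fin 3 → ℕ) (η : Fin 3) : v = point η (v η) (v (η + 1)) (v (η + 2)) := by
  funext i; fin_cases η <;> fin_cases i <;> rfl

lemma point_mem_Delta {N : ℕ} {η : Fin 3} {a b c : ℕ} :
    point η a b c ∈ Delta N ↔ a + b + c = N := by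
  fin_cases η <;> simp [Delta, point] <;> omega

lemma apply_le_of_mem_Delta {N : ℕ} {v : Fin 3 → ℕ} (hv : v ∈ Delta N) (η : Fin 3) : v η ≤ N := by
  rw [eq_point v η, point_mem_Delta] at hv
  omega

def line (N : ℕ) (η : Fin 3) (c : ℕ) : Set (Fin 3 → ℕ) := {v ∈ Delta N | v η = c}

lemma point_mem_line {N : ℕ} {η : Fin 3} {c s : ℕ} (h : c + s ≤ N) :
    point η c s (N - c - s) ∈ line N η c :=
  ⟨point_mem_Delta.mpr (by omega), point_self ..⟩

lemma exists_eq_point_of_mem_line {N : ℕ} {η : Fin 3} {c : ℕ} {v : Fin 3 → ℕ}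
    (hv : v ∈ line N η c) : ∃ s, c + s ≤ N ∧ v = point η c s (N - c - s) := by
  obtain ⟨hv, rfl⟩ := hv
  rw [eq_point v η, point_mem_Delta] at hv
  refine ⟨v (η + 1), by omega, ?_⟩
  rw [show N - v η - v (η + 1) = v (η + 2) by omega]
  exact eq_point v η

def cliqueVertex (r s t : ℕ) : Fin 3 → Fin 3 → ℕ :=
  ![![r + 1, s, t], ![r, s + 1, t], ![r, s, t + 1]]

lemma cliqueVertex_injective (r s t : ℕ) : Injective (cliqueVertex r s t) := by
  intro i j h
  fin_cases i <;> fin_cases j <;> simp_all [cliqueVertex]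

lemma range_cliqueVertex (r s t : ℕ) : Set.range (cliqueVertex r s t) = blackSet r s t := by
  ext v
  simp [cliqueVertex, blackSet]
  tauto

section BilliardArray

variable {F V : Type*} [Field F] [AddCommGroup V] [Module F V] {N : ℕ}
  {B : (Fin 3 → ℕ) → Submodule F V}

lemma IsBilliardArray.isAtom (hB : IsBilliardArray N B) {v : Fin 3 → ℕ} (hv : v ∈ Delta N) :
    IsAtom (B v) :=
  Submodule.isAtom_iff_finrank_eq_one.mpr (hB.1 v hv)

lemma IsBilliardArray.iSupIndep_line (hB : IsBilliardArray N B) (η : Fin 3) {c : ℕ}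
    (hc : c ≤ N) : iSupIndep fun x : line N η c => B x :=
  hB.2.1 _ ⟨η, c, hc, rfl⟩

lemma IsBilliardArray.disjoint_of_apply_eq (hB : IsBilliardArray N B) {v w : Fin 3 → ℕ}
    (hv : v ∈ Delta N) (hw : w ∈ Delta N) (hvw : v ≠ w) {η : Fin 3} (h : v η = w η) :
    Disjoint (B v) (B w) :=
  (hB.iSupIndep_line η (apply_le_of_mem_Delta hv η)).pairwiseDisjoint
    (i := ⟨v, hv, rfl⟩) (j := ⟨w, hw, h.symm⟩) (fun h' => hvw congr($h'.1))

lemma IsBilliardArray.clique_le_sup (hB : IsBilliardArray N B) {r s t : ℕ}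
    (h : r + s + t + 1 = N) (i : Fin 3) :
    B (cliqueVertex r s t i) ≤
      B (cliqueVertex r s t (i + 1)) ⊔ B (cliqueVertex r s t (i + 2)) := by
  have hmem : ∀ j, cliqueVertex r s t j ∈ Delta N := by
    intro j; fin_cases j <;> simp [cliqueVertex, Delta] <;> omega
  have hinj := cliqueVertex_injective r s t
  refine le_sup_of_not_iSupIndep_fin_three (fun j => hB.isAtom (hmem j)) (fun j => ?_)
    (fun hind => hB.2.2 r s t h ?_) i
  · have hcoord : cliqueVertex r s t j (j + 2) = cliqueVertex r s t (j + 1) (j + 2) := by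
      fin_cases j <;> rfl
    exact (hB.disjoint_of_apply_eq (hmem j) (hmem (j + 1))
      (hinj.ne (by fin_cases j <;> decide)) hcoord).ne (hB.isAtom (hmem j)).ne_bot
  · rw [← range_cliqueVertex]
    convert hind.comp (Equiv.ofInjective _ hinj).symm.injective with x
    simp [Equiv.apply_ofInjective_symm]

lemma IsBilliardArray.point_le_sup (hB : IsBilliardArray N B) (η : Fin 3) {a b c : ℕ}
    (h : a + b + c + 1 = N) :
    B (point η (a + 1) b c) ≤ B (point η a (b + 1) c) ⊔ B (point η a b (c + 1)) := by
  fin_cases η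
  · simpa [point_zero, cliqueVertex] using hB.clique_le_sup h 0
  · simpa [point_one, cliqueVertex] using hB.clique_le_sup (r := c) (s := a) (t := b) (by omega) 1
  · simpa [point_two, cliqueVertex] using hB.clique_le_sup (r := b) (s := c) (t := a) (by omega) 2

def lineSpan (B : (Fin 3 → ℕ) → Submodule F V) (N : ℕ) (η : Fin 3) (c : ℕ) : Submodule F V :=
  ⨆ v ∈ line N η c, B v

lemma le_lineSpan {η : Fin 3} {c : ℕ} {v : Fin 3 → ℕ} (hv : v ∈ line N η c) :
    B v ≤ lineSpan B N η c :=
  le_biSup B hv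

lemma IsBilliardArray.lineSpan_succ_le (hB : IsBilliardArray N B) (η : Fin 3) (c : ℕ) :
    lineSpan B N η (c + 1) ≤ lineSpan B N η c := by
  refine iSup₂_le fun v hv => ?_
  obtain ⟨s, hs, rfl⟩ := exists_eq_point_of_mem_line hv
  have hN : N - (c + 1) - s = N - c - (s + 1) := by omega
  rw [hN]
  refine (hB.point_le_sup η (by omega)).trans (sup_le (le_lineSpan ?_) (le_lineSpan ?_))
  · exact point_mem_line (by omega)
  · rw [show N - c - (s + 1) + 1 = N - c - s by omega]
    exact point_mem_line (by omega)

lemma IsBilliardArray.lineSpan_antitone (hB : IsBilliardArray N B) (η : Fin 3) :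
    Antitone (lineSpan B N η) :=
  antitone_nat_of_succ_le (hB.lineSpan_succ_le η)

lemma IsBilliardArray.le_lineSpan_succ_iff (hB : IsBilliardArray N B) (η : Fin 3)
    {c s t : ℕ} (h : c + s + t + 1 = N) :
    B (point η c (s + 1) t) ≤ lineSpan B N η (c + 1) ↔
      B (point η c s (t + 1)) ≤ lineSpan B N η (c + 1) := by
  have hX : B (point η (c + 1) s t) ≤ lineSpan B N η (c + 1) :=
    le_lineSpan ⟨point_mem_Delta.mpr (by omega), point_self ..⟩
  constructor
  · intro hle
    have := hB.point_le_sup (η + 2) (a := t) (b := c) (c := s) (by omega)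
    rw [point_rotate_two, point_rotate_two, point_rotate_two] at this
    exact this.trans (sup_le hX hle)
  · intro hle
    have := hB.point_le_sup (η + 1) (a := s) (b := t) (c := c) (by omega)
    rw [point_rotate, point_rotate, point_rotate] at this
    exact this.trans (sup_le hle hX)

lemma IsBilliardArray.le_lineSpan_succ_of_mem_line (hB : IsBilliardArray N B) {η : Fin 3}
    {c : ℕ} {l v : Fin 3 → ℕ} (hl : l ∈ line N η c) (hle : B l ≤ lineSpan B N η (c + 1))
    (hv : v ∈ line N η c) : B v ≤ lineSpan B N η (c + 1) := by
  set P : ℕ → Prop := fun s => B (point η c s (N - c - s)) ≤ lineSpan B N η (c + 1)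
  have hP : ∀ s, c + s ≤ N → (P s ↔ P 0) := by
    intro s hs
    induction s with
    | zero => rfl
    | succ s ih =>
      rw [← ih (by omega)]
      have := hB.le_lineSpan_succ_iff η (c := c) (s := s) (t := N - c - (s + 1)) (by omega)
      rwa [show N - c - (s + 1) + 1 = N - c - s by omega] at this
  obtain ⟨s, hs, rfl⟩ := exists_eq_point_of_mem_line hl
  obtain ⟨s', hs', rfl⟩ := exists_eq_point_of_mem_line hv
  exact (hP s' hs').mpr ((hP s hs).mp hle)

lemma lineSpan_succ_le_iSup (η : Fin 3) (c : ℕ) :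
    lineSpan B N η (c + 1) ≤ ⨆ s : Fin (N - c), B (point η (c + 1) s (N - (c + 1) - s)) :=
  iSup₂_le fun v hv => by
    obtain ⟨s, hs, rfl⟩ := exists_eq_point_of_mem_line hv
    exact le_iSup_of_le (⟨s, by omega⟩ : Fin (N - c)) le_rfl

theorem IsBilliardArray.disjoint_lineSpan_succ (hB : IsBilliardArray N B) {η : Fin 3} {c : ℕ}
    {l : Fin 3 → ℕ} (hl : l ∈ line N η c) : Disjoint (B l) (lineSpan B N η (c + 1)) := by
  rw [← (hB.isAtom hl.1).not_le_iff_disjoint]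
  intro hle
  have hc : c ≤ N := hl.2 ▸ apply_le_of_mem_Delta hl.1 η
  let g : Fin (N - c + 1) → line N η c := fun s =>
    ⟨point η c s (N - c - s), point_mem_line (by omega)⟩
  have hg : Injective g := fun s s' h => Fin.ext (by simpa [g] using congr($h.1 (η + 1)))
  have := card_le_card_of_iSupIndep_le_iSup ((hB.iSupIndep_line η hc).comp hg)
    (fun s => (hB.isAtom (g s).2.1).ne_bot) (fun s => hB.isAtom (point_mem_line (by omega)).1)
    (fun s => (hB.le_lineSpan_succ_of_mem_line hl hle (g s).2).trans (lineSpan_succ_le_iSup η c))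
  simp at this

end BilliardArray

end BA

theorem stmt15_general {F V : Type*} [Field F] [AddCommGroup V] [Module F V] (N : ℕ)
    (B : (Fin 3 → ℕ) → Submodule F V)
    (hB : BA.IsBilliardArray N B)
    (η : Fin 3) (S : Set (Fin 3 → ℕ)) (hS : S ⊆ BA.Delta N)
    (hgeo : ∀ x ∈ S, ∀ y ∈ S, x η = y η → x = y) :
    iSupIndep fun x : S => B x.1 := by
  refine iSupIndep_of_disjoint_iSup_lt (h := fun x : S => x.1 η)
    (fun x y hxy => Subtype.ext (hgeo _ x.2 _ y.2 hxy)) fun x => ?_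
  refine (hB.disjoint_lineSpan_succ (η := η) ⟨hS x.2, rfl⟩).mono_right (iSup₂_le fun y hxy => ?_)
  exact (BA.le_lineSpan ⟨hS y.2, rfl⟩).trans (hB.lineSpan_antitone η hxy)

/-- For a Billiard Array `B` on `V` and an `η`-geodesic subset `S ⊆ Δ_N`
(distinct elements of `S` have distinct `η`-coordinates), the sum
`∑_{λ ∈ S} B_λ` is direct. -/
theorem stmt15 {F V : Type*} [Field F] [AddCommGroup V] [Module F V] (N : ℕ)
    (hV : Module.finrank F V = N + 1) (B : (Fin 3 → ℕ) → Submodule F V)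
    (hB : BA.IsBilliardArray N B)
    (η : Fin 3) (S : Set (Fin 3 → ℕ)) (hS : S ⊆ BA.Delta N)
    (hgeo : ∀ x ∈ S, ∀ y ∈ S, x η = y η → x = y) :
    iSupIndep fun x : S => B x.1 :=
  stmt15_general N B hB η S hS hgeo
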